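/- arXiv:2409.12266 — 3 statements merged into one kernel-verified Lean document; each statement's English description precedes it below -/
import Mathlib

section
/- Define P : Fin n → Fin m → ℚ by P i j = M i j / m. Then P is row-stochastic (∑_{j} P i j = 1 for every i), and P maps the uniform distribution on n cells to the uniform distribution on m cells: for every j, ∑_{i=0}^{n-1} (1/n) · P i j = 1/m. In other words, if the level set L is distributed uniformly, the control probabilities P yield a uniform distribution on the next level set L'. -/
/-- The band matrix encoding the closed-form C-Uniform control probabilities
for the 1D random walker. -/
def M (n k : ℕ) (i : Fin n) (j : Fin (n + 2 * k)) : ℕ :=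
  if (j : ℕ) = (i : ℕ) then n - (i : ℕ)
  else if (j : ℕ) = (i : ℕ) + 2 * k then (i : ℕ) + 1
  else if (i : ℕ) < (j : ℕ) ∧ (j : ℕ) < (i : ℕ) + 2 * k then 1
  else 0

def M' (n k i j : ℕ) : ℕ :=
  if j = i then n - i
  else if j = i + 2 * k then i + 1
  else if i < j ∧ j < i + 2 * k then 1
  else 0

lemma M'_split (n k i j : ℕ) (hk : 1 ≤ k) :
    M' n k i j = (if j = i then n - i else 0) + (if j = i + 2 * k then i + 1 else 0)
      + (if i < j ∧ j < i + 2 * k then 1 else 0) := by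
  unfold M'; split_ifs <;> omega

lemma rowsum (n k : ℕ) (hn : 1 ≤ n) (hk : 1 ≤ k) (i : Fin n) :
    ∑ j : Fin (n + 2 * k), M n k i j = n + 2 * k := by
  have hi : (i : ℕ) < n := i.2
  have : ∑ j : Fin (n + 2 * k), M n k i j = ∑ j ∈ Finset.range (n + 2 * k), M' n k i j := by
    rw [← Fin.sum_univ_eq_sum_range]; rfl
  rw [this]
  simp_rw [M'_split n k i _ hk, Finset.sum_add_distrib, Finset.sum_ite_eq',
    Finset.sum_boole]
  have hfil : (Finset.range (n + 2 * k)).filter (fun j : ℕ => (i : ℕ) < j ∧ j < (i : ℕ) + 2 * k)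
      = Finset.Ioo (i : ℕ) ((i : ℕ) + 2 * k) := by
    ext a; simp [Finset.mem_Ioo, Finset.mem_range]; omega
  rw [hfil, Nat.card_Ioo]
  simp only [Nat.cast_id, Finset.mem_range]
  split_ifs <;> omega

lemma colsum (n k : ℕ) (hn : 1 ≤ n) (hk : 1 ≤ k) (j : Fin (n + 2 * k)) :
    ∑ i : Fin n, M n k i j = n := by
  have hj : (j : ℕ) < n + 2 * k := j.2
  set jv := (j : ℕ) with hjv
  have : ∑ i : Fin n, M n k i j = ∑ i ∈ Finset.range n, M' n k i jv := by
    rw [← Fin.sum_univ_eq_sum_range]; rfl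
  rw [this]
  simp_rw [M'_split n k _ jv hk, Finset.sum_add_distrib]
  have h1 : ∑ i ∈ Finset.range n, (if jv = i then n - i else 0)
      = if jv < n then n - jv else 0 := by
    rw [Finset.sum_ite_eq]; simp [Finset.mem_range]
  have h2 : ∑ i ∈ Finset.range n, (if jv = i + 2 * k then i + 1 else 0)
      = if 2 * k ≤ jv then jv - 2 * k + 1 else 0 := by
    by_cases h : 2 * k ≤ jv
    · have hc : ∀ i : ℕ, (jv = i + 2 * k) = (jv - 2 * k = i) := by
        intro i; apply propext; omega
      simp_rw [hc]
      rw [Finset.sum_ite_eq]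
      simp only [Nat.cast_id, Finset.mem_range]
      rw [if_pos (show jv - 2 * k < n by omega), if_pos h]
    · rw [if_neg h]
      apply Finset.sum_eq_zero
      intro i _
      rw [if_neg]; omega
  have h3 : ∑ i ∈ Finset.range n, (if i < jv ∧ jv < i + 2 * k then 1 else 0)
      = min n jv - (jv + 1 - 2 * k) := by
    rw [Finset.sum_boole]
    have : (Finset.range n).filter (fun i : ℕ => i < jv ∧ jv < i + 2 * k)
        = Finset.Ico (jv + 1 - 2 * k) (min n jv) := by
      ext a; simp [Finset.mem_Ico, Finset.mem_range]; omega
    rw [this, Nat.card_Ico]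
    simp
  rw [h1, h2, h3]
  split_ifs <;> omega

/-- The matrix `P i j = M i j / m` (with `m = n + 2*k`) is row-stochastic and
pushes the uniform distribution on the `n` cells of level set `L` forward to
the uniform distribution on the `m` cells of the next level set `L'`. -/
theorem closed_form_is_CUniform (n k : ℕ) (hn : 1 ≤ n) (hk : 1 ≤ k)
    (P : Fin n → Fin (n + 2 * k) → ℚ)
    (hP : ∀ i j, P i j = (M n k i j : ℚ) / ((n : ℚ) + 2 * k)) :
    (∀ i, ∑ j, P i j = 1) ∧
    (∀ j, ∑ i, (1 / (n : ℚ)) * P i j = 1 / ((n : ℚ) + 2 * k)) := by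
  have hm : ((n : ℚ) + 2 * k) ≠ 0 := by positivity
  have hn0 : (n : ℚ) ≠ 0 := by positivity
  constructor
  · intro i
    simp_rw [hP]
    rw [← Finset.sum_div]
    rw [div_eq_one_iff_eq hm]
    rw [← Nat.cast_sum]
    rw [rowsum n k hn hk i]
    push_cast; ring
  · intro j
    simp_rw [hP]
    have : ∀ i : Fin n, 1 / (n : ℚ) * ((M n k i j : ℚ) / ((n : ℚ) + 2 * k))
        = (M n k i j : ℚ) * (1 / ((n : ℚ) * ((n : ℚ) + 2 * k))) := by
      intro i; field_simp
    simp_rw [this]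
    rw [← Finset.sum_mul, ← Nat.cast_sum, colsum n k hn hk j]
    field_simp
end

section
/- For all integers n ≥ 1 and k ≥ 1, there exists a matrix P : Fin n → Fin (n + 2k) → ℚ with nonnegative entries such that: (i) P i j = 0 unless i ≤ j ≤ i + 2k (the transition from cell i can only reach cells j in the band of width 2k starting at i); (ii) ∑_j P i j = 1 for every i; and (iii) ∑_i P i j = n / (n + 2k) for every j. Hence C-Uniform control probabilities exist between any two consecutive level sets of the 1D random walker. -/
open Finset

lemma telescope_clamp (f : ℕ → ℕ) (hf : Monotone f) (a b M : ℕ)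
    (h0 : f 0 ≤ a) (hab : a ≤ b) (hM : b ≤ f M) :
    ∑ t ∈ Finset.range M, (min (f (t+1)) b - max (f t) a) = b - a := by
  have key : ∀ t, min (f (t+1)) b - max (f t) a
      = min (max (f (t+1)) a) b - min (max (f t) a) b := by
    intro t
    have h := hf (Nat.le_succ t)
    omega
  simp only [key]
  rw [Finset.sum_range_tsub (f := fun t => min (max (f t) a) b) (by
    intro x y hxy
    have := hf hxy
    show min (max (f x) a) b ≤ min (max (f y) a) b
    omega)]
  omega

/-- C-Uniform control probabilities exist between any two consecutive level
sets of the 1D random walker: there is a nonnegative row-stochastic matrix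
`P : Fin n → Fin (n + 2*k) → ℚ`, supported on the band `i ≤ j ≤ i + 2*k`,
whose columns all sum to `n / (n + 2*k)`. -/
theorem exists_CUniform_kernel_1D (n k : ℕ) (hn : 1 ≤ n) (hk : 1 ≤ k) :
    ∃ P : Fin n → Fin (n + 2 * k) → ℚ,
      (∀ i j, 0 ≤ P i j) ∧
      (∀ (i : Fin n) (j : Fin (n + 2 * k)),
        ¬((i : ℕ) ≤ (j : ℕ) ∧ (j : ℕ) ≤ (i : ℕ) + 2 * k) → P i j = 0) ∧
      (∀ i, ∑ j, P i j = 1) ∧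
      (∀ j, ∑ i, P i j = (n : ℚ) / ((n : ℚ) + 2 * k)) := by
  set m := n + 2 * k with hm
  have hm0 : 0 < m := by omega
  have hmQ : ((m : ℚ)) ≠ 0 := by positivity
  refine ⟨fun i j =>
    ((min (((j : ℕ)+1)*n) (((i : ℕ)+1)*m) - max ((j : ℕ)*n) ((i : ℕ)*m) : ℕ) : ℚ) / m,
    ?_, ?_, ?_, ?_⟩
  · intro i j
    positivity
  · intro i j hij
    have hi : (i : ℕ) < n := i.isLt
    have hle : min (((j : ℕ)+1)*n) (((i : ℕ)+1)*m)
        ≤ max ((j : ℕ)*n) ((i : ℕ)*m) := by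
      rcases (by omega : (j : ℕ) < (i : ℕ) ∨ (i : ℕ) + 2*k < (j : ℕ)) with h | h
      · calc min (((j : ℕ)+1)*n) (((i : ℕ)+1)*m) ≤ ((j : ℕ)+1)*n := min_le_left _ _
          _ ≤ (i : ℕ)*n := Nat.mul_le_mul_right _ (by omega)
          _ ≤ (i : ℕ)*m := Nat.mul_le_mul_left _ (by omega)
          _ ≤ max ((j : ℕ)*n) ((i : ℕ)*m) := le_max_right _ _
      · calc min (((j : ℕ)+1)*n) (((i : ℕ)+1)*m) ≤ ((i : ℕ)+1)*m := min_le_right _ _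
          _ = ((i : ℕ)+1)*n + ((i : ℕ)+1)*(2*k) := by rw [hm]; ring
          _ ≤ ((i : ℕ)+1)*n + n*(2*k) := by
              exact Nat.add_le_add_left (Nat.mul_le_mul_right _ (by omega)) _
          _ = ((i : ℕ)+1+2*k)*n := by ring
          _ ≤ (j : ℕ)*n := Nat.mul_le_mul_right _ (by omega)
          _ ≤ max ((j : ℕ)*n) ((i : ℕ)*m) := le_max_left _ _
    simp only [Nat.sub_eq_zero_of_le hle, Nat.cast_zero, zero_div]
  · intro i
    have hi : (i : ℕ) < n := i.isLt
    rw [Fin.sum_univ_eq_sum_range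
      (fun j => ((min ((j+1)*n) (((i : ℕ)+1)*m) - max (j*n) ((i : ℕ)*m) : ℕ) : ℚ) / m)]
    rw [← Finset.sum_div, ← Nat.cast_sum]
    rw [telescope_clamp (fun j => j*n) (fun x y h => Nat.mul_le_mul_right _ h)
      ((i : ℕ)*m) (((i : ℕ)+1)*m) m (by simp)
      (Nat.mul_le_mul_right _ (by omega))
      (by show ((i:ℕ)+1)*m ≤ m*n; rw [mul_comm m n]; exact Nat.mul_le_mul_right _ (by omega))]
    rw [Nat.succ_mul, Nat.add_sub_cancel_left]
    exact div_self hmQ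
  · intro j
    have hj : (j : ℕ) < m := j.isLt
    rw [Fin.sum_univ_eq_sum_range
      (fun i => ((min (((j : ℕ)+1)*n) ((i+1)*m) - max ((j : ℕ)*n) (i*m) : ℕ) : ℚ) / m)]
    have key : ∀ i ∈ Finset.range n,
        ((min (((j : ℕ)+1)*n) ((i+1)*m) - max ((j : ℕ)*n) (i*m) : ℕ) : ℚ) / m
        = ((min ((i+1)*m) (((j : ℕ)+1)*n) - max (i*m) ((j : ℕ)*n) : ℕ) : ℚ) / m := by
      intro i _
      rw [min_comm, max_comm]
    rw [Finset.sum_congr rfl key, ← Finset.sum_div, ← Nat.cast_sum]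
    rw [telescope_clamp (fun i => i*m) (fun x y h => Nat.mul_le_mul_right _ h)
      ((j : ℕ)*n) (((j : ℕ)+1)*n) n (by simp)
      (Nat.mul_le_mul_right _ (by omega))
      (by show ((j:ℕ)+1)*n ≤ n*m; rw [mul_comm n m]; exact Nat.mul_le_mul_right _ (by omega))]
    rw [Nat.succ_mul, Nat.add_sub_cancel_left]
    have : ((m : ℚ)) = (n : ℚ) + 2 * k := by rw [hm]; push_cast; ring
    rw [this]
end

section
/- Let n ≥ 1 and m ≥ 1 be integers and let E : Fin n → Fin m → Prop be an edge relation (recording which cells of L' are reachable from each cell of L by some control input). Then the following are equivalent: (a) there exists a C-Uniform transition kernel supported on E, i.e. a nonnegative p : Fin n → Fin m → ℝ with p i j = 0 whenever ¬ E i j, ∑_j p i j = 1 for all i, and ∑_i p i j = n/m for all j; (b) there exists a feasible flow of value n·m in the network, i.e. a nonnegative f : Fin n → Fin m → ℝ with f i j = 0 whenever ¬ E i j, ∑_j f i j ≤ m for all i, ∑_i f i j ≤ n for all j, and ∑_i ∑_j f i j = n·m. (This is the paper's Lemma: C-Uniform control inputs exist between levels L and L' if and only if n×m units of flow can be transported by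 the flow network.) -/
/-- The paper's Lemma: C-Uniform control inputs exist between levels `L` and
`L'` (supported on the edge relation `E` given by the control inputs) if and
only if `n * m` units of flow can be transported by the flow network. -/
theorem CUniform_iff_maxflow (n m : ℕ) (hn : 1 ≤ n) (hm : 1 ≤ m)
    (E : Fin n → Fin m → Prop) :
    (∃ p : Fin n → Fin m → ℝ,
      (∀ i j, 0 ≤ p i j) ∧
      (∀ i j, ¬ E i j → p i j = 0) ∧
      (∀ i, ∑ j, p i j = 1) ∧
      (∀ j, ∑ i, p i j = (n : ℝ) / (m : ℝ))) ↔
    (∃ f : Fin n → Fin m → ℝ,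
      (∀ i j, 0 ≤ f i j) ∧
      (∀ i j, ¬ E i j → f i j = 0) ∧
      (∀ i, ∑ j, f i j ≤ (m : ℝ)) ∧
      (∀ j, ∑ i, f i j ≤ (n : ℝ)) ∧
      (∑ i, ∑ j, f i j = (n : ℝ) * (m : ℝ))) := by
  have hm0 : (0 : ℝ) < m := by exact_mod_cast hm
  constructor
  · rintro ⟨p, hpos, hsupp, hrow, hcol⟩
    refine ⟨fun i j => m * p i j, fun i j => mul_nonneg hm0.le (hpos i j),
      fun i j h => by dsimp only; rw [hsupp i j h, mul_zero], ?_, ?_, ?_⟩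
    · intro i; rw [← Finset.mul_sum, hrow i, mul_one]
    · intro j; rw [← Finset.mul_sum, hcol j, mul_div_cancel₀ _ hm0.ne']
    · calc ∑ i, ∑ j, (m : ℝ) * p i j = ∑ i : Fin n, (m : ℝ) := by
            refine Finset.sum_congr rfl fun i _ => ?_
            rw [← Finset.mul_sum, hrow i, mul_one]
        _ = n * m := by simp [mul_comm]
  · rintro ⟨f, hpos, hsupp, hrow, hcol, htot⟩
    have hroweq : ∀ i, ∑ j, f i j = (m : ℝ) := by
      have hsum : ∑ i, ∑ j, f i j = ∑ _i : Fin n, (m : ℝ) := by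
        rw [htot]; simp [mul_comm]
      have h := (Finset.sum_eq_sum_iff_of_le
        (s := Finset.univ) (f := fun i => ∑ j, f i j) (g := fun _ => (m : ℝ))
        (fun i _ => hrow i)).mp hsum
      exact fun i => h i (Finset.mem_univ i)
    refine ⟨fun i j => f i j / m, fun i j => div_nonneg (hpos i j) hm0.le,
      fun i j h => by dsimp only; rw [hsupp i j h, zero_div], ?_, ?_⟩
    · intro i; rw [← Finset.sum_div, hroweq i, div_self hm0.ne']
    · intro j
      rw [← Finset.sum_div]
      have hcoleq : ∑ i, f i j = (n : ℝ) := by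
        by_contra hne
        have hlt : ∑ i, f i j < (n : ℝ) := lt_of_le_of_ne (hcol j) hne
        have : ∑ j', ∑ i, f i j' < ∑ j' : Fin m, (n : ℝ) :=
          Finset.sum_lt_sum (fun j' _ => hcol j') ⟨j, Finset.mem_univ j, hlt⟩
        rw [Finset.sum_comm, htot] at this
        simp [mul_comm] at this
      rw [hcoleq]
end
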